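/- For complex-valued functions $f, g$ and a nonnegative function $Q$, with $N_2(f) := i\big(|Q+f|^4(Q+f) - Q^5 - 3Q^4 f - 2Q^4 \bar f\big)$, there holds $\|N_2(f) - N_2(g)\|_{L^{6/5}(\mathbb{R}^3)} \le C\|f-g\|_{L^6}\big(\|Q\|_{L^6}^3\|f\|_{L^6} + \|Q\|_{L^6}^3\|g\|_{L^6} + \|f\|_{L^6}^4 + \|g\|_{L^6}^4\big)$ for an absolute constant $C$. -/

import Mathlib

open MeasureTheory
open scoped ENNReal

noncomputable section

set_option maxHeartbeats 1000000

open ComplexConjugate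

lemma norm_sq_sub_sq' (a b : ℂ) : ‖a^2 - b^2‖ ≤ ‖a - b‖ * (‖a‖ + ‖b‖) := by
  have h : a^2 - b^2 = (a - b) * (a + b) := by ring
  rw [h, norm_mul]
  exact mul_le_mul_of_nonneg_left (norm_add_le _ _) (norm_nonneg _)

lemma norm_cube_sub_cube' (a b : ℂ) : ‖a^3 - b^3‖ ≤ ‖a - b‖ * (‖a‖ + ‖b‖)^2 := by
  have h : a^3 - b^3 = (a - b) * (a^2 + a*b + b^2) := by ring
  rw [h, norm_mul]
  refine mul_le_mul_of_nonneg_left ?_ (norm_nonneg _)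
  calc ‖a^2 + a*b + b^2‖ ≤ ‖a^2‖ + ‖a*b‖ + ‖b^2‖ := norm_add₃_le
    _ = ‖a‖^2 + ‖a‖*‖b‖ + ‖b‖^2 := by rw [norm_pow, norm_mul, norm_pow]
    _ ≤ (‖a‖ + ‖b‖)^2 := by nlinarith [mul_nonneg (norm_nonneg a) (norm_nonneg b)]

lemma norm_mul_sub_mul' (x y z w : ℂ) : ‖x*y - z*w‖ ≤ ‖x - z‖*‖y‖ + ‖z‖*‖y - w‖ := by
  have h : x*y - z*w = (x - z)*y + z*(y - w) := by ring
  rw [h]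
  exact (norm_add_le _ _).trans (by rw [norm_mul, norm_mul])

lemma aux_base1 (q s : ℝ) (hq : 0 ≤ q) (hs : 0 ≤ s) : q^2*s ≤ q^3 + s^3 := by
  rcases le_total q s with h | h
  · nlinarith [mul_nonneg hs (mul_nonneg (sub_nonneg.2 h) (by linarith : (0:ℝ) ≤ s + q)), pow_nonneg hq 3]
  · nlinarith [mul_nonneg hq (mul_nonneg (sub_nonneg.2 h) (by linarith : (0:ℝ) ≤ q + s)), pow_nonneg hs 3]

lemma aux_base2 (q s : ℝ) (hq : 0 ≤ q) (hs : 0 ≤ s) : q*s^2 ≤ q^3 + s^3 := by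
  rcases le_total q s with h | h
  · nlinarith [mul_nonneg hs (mul_nonneg (sub_nonneg.2 h) (by linarith : (0:ℝ) ≤ s + q)), pow_nonneg hq 3]
  · nlinarith [mul_nonneg hq (mul_nonneg (sub_nonneg.2 h) (by linarith : (0:ℝ) ≤ q + s)), pow_nonneg hs 3]

lemma aux_G (q s : ℝ) (hq : 0 ≤ q) (hs : 0 ≤ s) :
    9*(q^3*s) + 13*(q^2*s^2) + 4*(q*s^3) + s*(q+s)^3 + 4*s^2*(q+s)^2
      ≤ 50*(q^3*s + s^4) := by
  have h1 : q^2*s^2 ≤ q^3*s + s^4 := by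
    nlinarith [mul_le_mul_of_nonneg_right (aux_base1 q s hq hs) hs]
  have h2 : q*s^3 ≤ q^3*s + s^4 := by
    nlinarith [mul_le_mul_of_nonneg_right (aux_base2 q s hq hs) hs]
  nlinarith [h1, h2]

lemma aux_fin (q A B : ℝ) (hq : 0 ≤ q) (hA : 0 ≤ A) (hB : 0 ≤ B) :
    50*(q^3*(A+B) + (A+B)^4) ≤ 400*(q^3*A + q^3*B + A^4 + B^4) := by
  have hs4 : (A+B)^4 ≤ 8*(A^4+B^4) := by
    nlinarith [sq_nonneg (A-B), sq_nonneg (A+B), sq_nonneg (A^2-B^2), mul_nonneg hA hB, sq_nonneg (A^2+B^2-2*A*B)]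
  nlinarith [mul_nonneg (pow_nonneg hq 3) hA, mul_nonneg (pow_nonneg hq 3) hB, pow_nonneg hA 4, pow_nonneg hB 4]

lemma key (q : ℝ) (hq : 0 ≤ q) (a b : ℂ) :
    ‖((q:ℂ)+a)^3*((q:ℂ)+conj a)^2 - ((q:ℂ)+b)^3*((q:ℂ)+conj b)^2
      - 3*(q:ℂ)^4*(a-b) - 2*(q:ℂ)^4*(conj a - conj b)‖
    ≤ 400 * ‖a-b‖ * (q^3*‖a‖ + q^3*‖b‖ + ‖a‖^4 + ‖b‖^4) := by
  obtain ⟨a', ha'⟩ : ∃ c, conj a = c := ⟨_, rfl⟩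
  obtain ⟨b', hb'⟩ : ∃ c, conj b = c := ⟨_, rfl⟩
  have hna : ‖a'‖ = ‖a‖ := by rw [← ha']; exact RCLike.norm_conj a
  have hnb : ‖b'‖ = ‖b‖ := by rw [← hb']; exact RCLike.norm_conj b
  have hnd : ‖a' - b'‖ = ‖a - b‖ := by rw [← ha', ← hb', ← map_sub]; exact RCLike.norm_conj _
  rw [ha', hb']
  set A := ‖a‖ with hA
  set B := ‖b‖ with hB
  set D := ‖a - b‖ with hD
  set s := A + B with hs
  have hA0 : 0 ≤ A := norm_nonneg a
  have hB0 : 0 ≤ B := norm_nonneg b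
  have hD0 : 0 ≤ D := norm_nonneg _
  have hs0 : 0 ≤ s := by positivity
  have hAs : A ≤ s := by simp [hs]; linarith
  have hBs : B ≤ s := by simp [hs]; linarith
  have hid : ((q:ℂ)+a)^3*((q:ℂ)+a')^2 - ((q:ℂ)+b)^3*((q:ℂ)+b')^2
      - 3*(q:ℂ)^4*(a-b) - 2*(q:ℂ)^4*(a' - b')
      = 3*(q:ℂ)^3*(a^2-b^2) + (q:ℂ)^2*(a^3-b^3) + 6*(q:ℂ)^3*(a*a'-b*b')
        + 6*(q:ℂ)^2*(a^2*a'-b^2*b') + 2*(q:ℂ)*(a^3*a'-b^3*b')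
        + (a'^2*((q:ℂ)+a)^3 - b'^2*((q:ℂ)+b)^3) := by ring
  rw [hid]
  have h1 : ‖a^2 - b^2‖ ≤ D*s := norm_sq_sub_sq' a b
  have h2 : ‖a^3 - b^3‖ ≤ D*s^2 := norm_cube_sub_cube' a b
  have h3 : ‖a*a' - b*b'‖ ≤ D*s := by
    have t := norm_mul_sub_mul' a a' b b'
    rw [hna, hnd] at t
    refine t.trans ?_
    rw [hs]; nlinarith [mul_nonneg hD0 hB0]
  have h4 : ‖a^2*a' - b^2*b'‖ ≤ 2*(D*s^2) := by
    have t := norm_mul_sub_mul' (a^2) a' (b^2) b'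
    rw [hna, hnd, norm_pow, ← hB] at t
    refine t.trans ?_
    have e1 : ‖a^2-b^2‖*A ≤ D*s*s := by
      refine (mul_le_mul h1 hAs hA0 (by positivity)).trans_eq rfl
    nlinarith [mul_le_mul_of_nonneg_right (pow_le_pow_left₀ hB0 hBs 2) hD0, sq_nonneg s]
  have h5 : ‖a^3*a' - b^3*b'‖ ≤ 2*(D*s^3) := by
    have t := norm_mul_sub_mul' (a^3) a' (b^3) b'
    rw [hna, hnd, norm_pow, ← hB] at t
    refine t.trans ?_
    have e1 : ‖a^3-b^3‖*A ≤ D*s^2*s := mul_le_mul h2 hAs hA0 (by positivity)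
    have e2 : B^3*D ≤ s^3*D := mul_le_mul_of_nonneg_right (pow_le_pow_left₀ hB0 hBs 3) hD0
    nlinarith
  have hqa : ‖(q:ℂ)+a‖ ≤ q + s := by
    calc ‖(q:ℂ)+a‖ ≤ ‖(q:ℂ)‖ + ‖a‖ := norm_add_le _ _
      _ ≤ q + s := by rw [Complex.norm_real, Real.norm_of_nonneg hq]; linarith
  have hqb : ‖(q:ℂ)+b‖ ≤ q + s := by
    calc ‖(q:ℂ)+b‖ ≤ ‖(q:ℂ)‖ + ‖b‖ := norm_add_le _ _
      _ ≤ q + s := by rw [Complex.norm_real, Real.norm_of_nonneg hq]; linarith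
  have h6 : ‖a'^2*((q:ℂ)+a)^3 - b'^2*((q:ℂ)+b)^3‖
      ≤ D*s*(q+s)^3 + 4*(s^2*D)*(q+s)^2 := by
    have t := norm_mul_sub_mul' (a'^2) (((q:ℂ)+a)^3) (b'^2) (((q:ℂ)+b)^3)
    have e1 : ‖a'^2 - b'^2‖ ≤ D*s := by
      have := norm_sq_sub_sq' a' b'
      rw [hna, hnb, hnd] at this; exact this
    have e2 : ‖((q:ℂ)+a)^3‖ ≤ (q+s)^3 := by
      rw [norm_pow]; exact pow_le_pow_left₀ (norm_nonneg _) hqa 3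
    have e3 : ‖((q:ℂ)+a)^3 - ((q:ℂ)+b)^3‖ ≤ 4*D*(q+s)^2 := by
      have t3 := norm_cube_sub_cube' ((q:ℂ)+a) ((q:ℂ)+b)
      have hsub : ((q:ℂ)+a) - ((q:ℂ)+b) = a - b := by ring
      rw [hsub] at t3
      refine t3.trans ?_
      have hnn : (0:ℝ) ≤ ‖(q:ℂ)+a‖ + ‖(q:ℂ)+b‖ := by positivity
      have p1 : (‖(q:ℂ)+a‖ + ‖(q:ℂ)+b‖)^2 ≤ (2*(q+s))^2 :=
        pow_le_pow_left₀ hnn (by linarith) 2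
      calc ‖a-b‖ * (‖(q:ℂ)+a‖ + ‖(q:ℂ)+b‖)^2 ≤ D * ((2*(q+s))^2) :=
            mul_le_mul_of_nonneg_left p1 hD0
        _ = 4*D*(q+s)^2 := by ring
    simp only [norm_pow] at t
    rw [hnb] at t
    refine t.trans ?_
    have e4 : ‖a'^2-b'^2‖ * ‖(q:ℂ)+a‖^3 ≤ D*s*(q+s)^3 := by
      have e2' : ‖(q:ℂ)+a‖^3 ≤ (q+s)^3 := pow_le_pow_left₀ (norm_nonneg _) hqa 3
      exact mul_le_mul e1 e2' (by positivity) (mul_nonneg hD0 hs0)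
    have e5 : B^2 * ‖((q:ℂ)+a)^3 - ((q:ℂ)+b)^3‖ ≤ s^2 * (4*D*(q+s)^2) :=
      mul_le_mul (pow_le_pow_left₀ hB0 hBs 2) e3 (norm_nonneg _) (sq_nonneg s)
    nlinarith
  have tri : ∀ u v w p r t : ℂ, ‖u+v+w+p+r+t‖ ≤ ‖u‖+‖v‖+‖w‖+‖p‖+‖r‖+‖t‖ := by
    intro u v w p r t
    have h1 := norm_add_le (u+v+w+p+r) t
    have h2 := norm_add_le (u+v+w+p) r
    have h3 := norm_add_le (u+v+w) p
    have h4 := norm_add_le (u+v) w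
    have h5 := norm_add_le u v
    linarith
  refine (tri _ _ _ _ _ _).trans ?_
  have nqq : ‖(q:ℂ)‖ = q := by rw [Complex.norm_real, Real.norm_of_nonneg hq]
  have n3 : ‖(3:ℂ)‖ = 3 := by norm_num
  have n6 : ‖(6:ℂ)‖ = 6 := by norm_num
  have n2 : ‖(2:ℂ)‖ = 2 := by norm_num
  simp only [norm_mul, norm_pow, nqq, n3, n6, n2]
  have m1 : 3*q^3*‖a^2-b^2‖ ≤ 3*q^3*(D*s) :=
    mul_le_mul_of_nonneg_left h1 (by positivity)
  have m2 : q^2*‖a^3-b^3‖ ≤ q^2*(D*s^2) :=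
    mul_le_mul_of_nonneg_left h2 (by positivity)
  have m3 : 6*q^3*‖a*a'-b*b'‖ ≤ 6*q^3*(D*s) :=
    mul_le_mul_of_nonneg_left h3 (by positivity)
  have m4 : 6*q^2*‖a^2*a'-b^2*b'‖ ≤ 6*q^2*(2*(D*s^2)) :=
    mul_le_mul_of_nonneg_left h4 (by positivity)
  have m5 : 2*q*‖a^3*a'-b^3*b'‖ ≤ 2*q*(2*(D*s^3)) :=
    mul_le_mul_of_nonneg_left h5 (by positivity)
  have hGD : D*(9*(q^3*s) + 13*(q^2*s^2) + 4*(q*s^3) + s*(q+s)^3 + 4*s^2*(q+s)^2)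
      ≤ D*(50*(q^3*s + s^4)) := mul_le_mul_of_nonneg_left (aux_G q s hq hs0) hD0
  have hfin : D*(50*(q^3*s + s^4)) ≤ 400*D*(q^3*A + q^3*B + A^4 + B^4) := by
    have h := mul_le_mul_of_nonneg_left (aux_fin q A B hq hA0 hB0) hD0
    rw [hs]; linarith [h]
  linarith only [h6, m1, m2, m3, m4, m5, hGD, hfin]

lemma quartic_expand (w : ℂ) : ((‖w‖:ℝ):ℂ)^4 * w = w^3 * (conj w)^2 := by
  have h2 : ((‖w‖:ℝ):ℂ)^2 = w * conj w := by
    rw [Complex.mul_conj]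
    norm_cast
    rw [Complex.normSq_eq_norm_sq]
  calc ((‖w‖:ℝ):ℂ)^4 * w = (((‖w‖:ℝ):ℂ)^2)^2 * w := by ring
    _ = (w * conj w)^2 * w := by rw [h2]
    _ = w^3 * (conj w)^2 := by ring

lemma enn_e1 : (1:ℝ≥0∞)/(6/5) = 5/6 := by
  rw [one_div, ENNReal.inv_div (Or.inl (by norm_num)) (Or.inl (by norm_num))]

lemma enn_e2 : (1:ℝ≥0∞)/(3/2) = 2/3 := by
  rw [one_div, ENNReal.inv_div (Or.inl (by norm_num)) (Or.inl (by norm_num))]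

lemma enn_hpqr1 : (1:ℝ≥0∞)/(6/5) = 1/6 + 1/(3/2) := by
  rw [enn_e1, enn_e2]
  have h : (2/3 : ℝ≥0∞) = 4/6 := by
    rw [ENNReal.div_eq_div_iff (by norm_num) (by norm_num) (by norm_num) (by norm_num)]
    norm_num
  rw [h, ENNReal.div_add_div_same]
  norm_num

lemma enn_hpqr2 : (1:ℝ≥0∞)/(3/2) = 1/2 + 1/6 := by
  rw [enn_e2]
  have h2 : (1/2 : ℝ≥0∞) = 3/6 := by
    rw [ENNReal.div_eq_div_iff (by norm_num) (by norm_num) (by norm_num) (by norm_num)]; norm_num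
  have h3 : (2/3 : ℝ≥0∞) = 4/6 := by
    rw [ENNReal.div_eq_div_iff (by norm_num) (by norm_num) (by norm_num) (by norm_num)]; norm_num
  rw [h2, h3, ENNReal.div_add_div_same]
  norm_num

lemma enn_onele : (1:ℝ≥0∞) ≤ 3/2 := by
  rw [ENNReal.le_div_iff_mul_le (Or.inl (by norm_num)) (Or.inl (by norm_num))]
  norm_num

lemma enn_m1 : (2 : ℝ≥0∞) * ENNReal.ofReal 3 = 6 := by
  rw [ENNReal.ofReal_ofNat]; norm_num

lemma enn_m2 : (3/2 : ℝ≥0∞) * ENNReal.ofReal 4 = 6 := by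
  rw [ENNReal.ofReal_ofNat]
  have h : (3/2 : ℝ≥0∞)*4 = 12/2 := by
    rw [div_eq_mul_inv, div_eq_mul_inv, mul_right_comm]
    norm_num
  rw [h]
  exact ((ENNReal.eq_div_iff (by norm_num) (by norm_num)).mpr (by norm_num)).symm

/-- The quadratic-and-higher remainder of the quintic nonlinearity expanded
around `Q`: `N₂(f) = i(|Q+f|⁴(Q+f) - Q⁵ - 3Q⁴f - 2Q⁴f̄)`. -/
def N2 (Q : EuclideanSpace ℝ (Fin 3) → ℝ) (f : EuclideanSpace ℝ (Fin 3) → ℂ) :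
    EuclideanSpace ℝ (Fin 3) → ℂ :=
  fun x => Complex.I * ((‖(Q x : ℂ) + f x‖ : ℂ) ^ 4 * ((Q x : ℂ) + f x)
    - (Q x : ℂ) ^ 5 - 3 * (Q x : ℂ) ^ 4 * f x
    - 2 * (Q x : ℂ) ^ 4 * (starRingEnd ℂ) (f x))

/-- `L^{6/5}` difference estimate for `N₂`:
`‖N₂(f) - N₂(g)‖_{6/5} ≤ C‖f-g‖₆(‖Q‖₆³‖f‖₆ + ‖Q‖₆³‖g‖₆ + ‖f‖₆⁴ + ‖g‖₆⁴)`. -/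
theorem stmt_11 :
    ∃ C : ℝ, 0 < C ∧
      ∀ (Q : EuclideanSpace ℝ (Fin 3) → ℝ) (f g : EuclideanSpace ℝ (Fin 3) → ℂ),
        (∀ x, 0 ≤ Q x) →
        AEStronglyMeasurable Q volume → AEStronglyMeasurable f volume →
        AEStronglyMeasurable g volume →
        eLpNorm (fun x => N2 Q f x - N2 Q g x) (6 / 5 : ℝ≥0∞) volume
          ≤ ENNReal.ofReal C * eLpNorm (fun x => f x - g x) 6 volume *
            (eLpNorm Q 6 volume ^ 3 * eLpNorm f 6 volume
              + eLpNorm Q 6 volume ^ 3 * eLpNorm g 6 volume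
              + eLpNorm f 6 volume ^ 4 + eLpNorm g 6 volume ^ 4) := by
  refine ⟨400, by norm_num, ?_⟩
  intro Q f g hQ hQm hfm hgm
  set h : EuclideanSpace ℝ (Fin 3) → ℝ := fun x =>
    (Q x)^3*‖f x‖ + (Q x)^3*‖g x‖ + ‖f x‖^4 + ‖g x‖^4 with hh
  -- pointwise bound
  have hpt : ∀ x, ‖N2 Q f x - N2 Q g x‖ ≤ (400:ℝ) * (‖f x - g x‖ * h x) := by
    intro x
    have hEq : N2 Q f x - N2 Q g x = Complex.I *
        (((Q x:ℂ)+f x)^3*((Q x:ℂ)+conj (f x))^2 - ((Q x:ℂ)+g x)^3*((Q x:ℂ)+conj (g x))^2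
          - 3*(Q x:ℂ)^4*(f x - g x) - 2*(Q x:ℂ)^4*(conj (f x) - conj (g x))) := by
      simp only [N2]
      rw [quartic_expand ((Q x:ℂ)+f x), quartic_expand ((Q x:ℂ)+g x)]
      simp only [map_add, Complex.conj_ofReal]
      ring
    rw [hEq, norm_mul, Complex.norm_I, one_mul]
    have := key (Q x) (hQ x) (f x) (g x)
    simp only [hh]
    linarith [this]
  -- measurability of h
  have hQ3m : AEStronglyMeasurable (fun x => (Q x)^3) volume := hQm.pow 3
  have hm1 : AEStronglyMeasurable (fun x => (Q x)^3*‖f x‖) volume := hQ3m.mul hfm.norm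
  have hm2 : AEStronglyMeasurable (fun x => (Q x)^3*‖g x‖) volume := hQ3m.mul hgm.norm
  have hm3 : AEStronglyMeasurable (fun x => ‖f x‖^4) volume := hfm.norm.pow 4
  have hm4 : AEStronglyMeasurable (fun x => ‖g x‖^4) volume := hgm.norm.pow 4
  have hhm : AEStronglyMeasurable h volume := ((hm1.add hm2).add hm3).add hm4
  -- Step A: pointwise majorization
  have stepA : eLpNorm (fun x => N2 Q f x - N2 Q g x) (6/5 : ℝ≥0∞) volume
      ≤ eLpNorm (fun x => (400:ℝ) * (‖f x - g x‖ * h x)) (6/5 : ℝ≥0∞) volume := by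
    refine eLpNorm_mono_real ?_
    intro x
    exact hpt x
  -- Step B: pull out the constant
  have stepB : eLpNorm (fun x => (400:ℝ) * (‖f x - g x‖ * h x)) (6/5 : ℝ≥0∞) volume
      = ENNReal.ofReal 400 * eLpNorm (fun x => ‖f x - g x‖ * h x) (6/5 : ℝ≥0∞) volume := by
    have hfun : (fun x => (400:ℝ) * (‖f x - g x‖ * h x))
        = (400:ℝ) • (fun x => ‖f x - g x‖ * h x) := by
      funext x; simp [smul_eq_mul]
    rw [hfun, eLpNorm_const_smul]
    congr 1
    rw [← Real.enorm_eq_ofReal (by norm_num : (0:ℝ) ≤ 400)]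
  -- Step C: Hölder 1/(6/5) = 1/6 + 1/(3/2)
  have stepC : eLpNorm (fun x => ‖f x - g x‖ * h x) (6/5 : ℝ≥0∞) volume
      ≤ eLpNorm (fun x => f x - g x) 6 volume * eLpNorm h (3/2 : ℝ≥0∞) volume := by
    refine (eLpNorm_le_eLpNorm_mul_eLpNorm'_of_norm (hfm.sub hgm) hhm
      (fun z t => ‖z‖ * t) 1 ?_ (hpqr := ⟨by simpa only [one_div] using enn_hpqr1.symm⟩)).trans_eq
      (by rw [ENNReal.coe_one, one_mul]; rfl)
    refine Filter.Eventually.of_forall fun x => ?_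
    rw [norm_mul, norm_norm, NNReal.coe_one, one_mul]
  -- Step D: triangle inequality for h in L^{3/2}
  have stepD : eLpNorm h (3/2 : ℝ≥0∞) volume
      ≤ eLpNorm (fun x => (Q x)^3*‖f x‖) (3/2 : ℝ≥0∞) volume
        + eLpNorm (fun x => (Q x)^3*‖g x‖) (3/2 : ℝ≥0∞) volume
        + eLpNorm (fun x => ‖f x‖^4) (3/2 : ℝ≥0∞) volume
        + eLpNorm (fun x => ‖g x‖^4) (3/2 : ℝ≥0∞) volume := by
    have d1 : eLpNorm h (3/2 : ℝ≥0∞) volume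
        ≤ eLpNorm (fun x => (Q x)^3*‖f x‖ + (Q x)^3*‖g x‖ + ‖f x‖^4) (3/2 : ℝ≥0∞) volume
          + eLpNorm (fun x => ‖g x‖^4) (3/2 : ℝ≥0∞) volume :=
      eLpNorm_add_le ((hm1.add hm2).add hm3) hm4 enn_onele
    have d2 : eLpNorm (fun x => (Q x)^3*‖f x‖ + (Q x)^3*‖g x‖ + ‖f x‖^4) (3/2 : ℝ≥0∞) volume
        ≤ eLpNorm (fun x => (Q x)^3*‖f x‖ + (Q x)^3*‖g x‖) (3/2 : ℝ≥0∞) volume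
          + eLpNorm (fun x => ‖f x‖^4) (3/2 : ℝ≥0∞) volume :=
      eLpNorm_add_le (hm1.add hm2) hm3 enn_onele
    have d3 : eLpNorm (fun x => (Q x)^3*‖f x‖ + (Q x)^3*‖g x‖) (3/2 : ℝ≥0∞) volume
        ≤ eLpNorm (fun x => (Q x)^3*‖f x‖) (3/2 : ℝ≥0∞) volume
          + eLpNorm (fun x => (Q x)^3*‖g x‖) (3/2 : ℝ≥0∞) volume :=
      eLpNorm_add_le hm1 hm2 enn_onele
    calc eLpNorm h (3/2 : ℝ≥0∞) volume
        ≤ _ + eLpNorm (fun x => ‖g x‖^4) (3/2 : ℝ≥0∞) volume := d1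
      _ ≤ _ := by gcongr; exact d2.trans (by gcongr)
  -- Step E: eLpNorm (Q^3) 2 = eLpNorm Q 6 ^ 3
  have hQ3norm : eLpNorm (fun x => (Q x)^3) 2 volume = eLpNorm Q 6 volume ^ 3 := by
    have hfun : (fun x => (Q x)^3) = fun x => ‖Q x‖ ^ (3:ℝ) := by
      funext x
      rw [Real.norm_of_nonneg (hQ x), ← Real.rpow_natCast]
      norm_num
    rw [hfun, eLpNorm_norm_rpow Q (by norm_num : (0:ℝ) < 3), enn_m1,
      ← ENNReal.rpow_natCast (eLpNorm Q 6 volume) 3]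
    norm_num
  -- Step F: fourth power norms
  have hf4 : eLpNorm (fun x => ‖f x‖^4) (3/2 : ℝ≥0∞) volume = eLpNorm f 6 volume ^ 4 := by
    have hfun : (fun x => ‖f x‖^4) = fun x => ‖f x‖ ^ (4:ℝ) := by
      funext x
      rw [← Real.rpow_natCast]
      norm_num
    rw [hfun, eLpNorm_norm_rpow f (by norm_num : (0:ℝ) < 4), enn_m2,
      ← ENNReal.rpow_natCast (eLpNorm f 6 volume) 4]
    norm_num
  have hg4 : eLpNorm (fun x => ‖g x‖^4) (3/2 : ℝ≥0∞) volume = eLpNorm g 6 volume ^ 4 := by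
    have hfun : (fun x => ‖g x‖^4) = fun x => ‖g x‖ ^ (4:ℝ) := by
      funext x
      rw [← Real.rpow_natCast]
      norm_num
    rw [hfun, eLpNorm_norm_rpow g (by norm_num : (0:ℝ) < 4), enn_m2,
      ← ENNReal.rpow_natCast (eLpNorm g 6 volume) 4]
    norm_num
  -- Step G: Hölder for the mixed terms
  have hmix_f : eLpNorm (fun x => (Q x)^3*‖f x‖) (3/2 : ℝ≥0∞) volume
      ≤ eLpNorm Q 6 volume ^ 3 * eLpNorm f 6 volume := by
    rw [← hQ3norm]
    refine (eLpNorm_le_eLpNorm_mul_eLpNorm'_of_norm hQ3m hfm (fun t z => t * ‖z‖) 1 ?_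
      (hpqr := ⟨by simpa only [one_div] using enn_hpqr2.symm⟩)).trans_eq
      (by rw [ENNReal.coe_one, one_mul])
    refine Filter.Eventually.of_forall fun x => ?_
    rw [norm_mul, norm_norm, NNReal.coe_one, one_mul]
  have hmix_g : eLpNorm (fun x => (Q x)^3*‖g x‖) (3/2 : ℝ≥0∞) volume
      ≤ eLpNorm Q 6 volume ^ 3 * eLpNorm g 6 volume := by
    rw [← hQ3norm]
    refine (eLpNorm_le_eLpNorm_mul_eLpNorm'_of_norm hQ3m hgm (fun t z => t * ‖z‖) 1 ?_
      (hpqr := ⟨by simpa only [one_div] using enn_hpqr2.symm⟩)).trans_eq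
      (by rw [ENNReal.coe_one, one_mul])
    refine Filter.Eventually.of_forall fun x => ?_
    rw [norm_mul, norm_norm, NNReal.coe_one, one_mul]
  -- assemble
  calc eLpNorm (fun x => N2 Q f x - N2 Q g x) (6/5 : ℝ≥0∞) volume
      ≤ eLpNorm (fun x => (400:ℝ) * (‖f x - g x‖ * h x)) (6/5 : ℝ≥0∞) volume := stepA
    _ = ENNReal.ofReal 400 * eLpNorm (fun x => ‖f x - g x‖ * h x) (6/5 : ℝ≥0∞) volume := stepB
    _ ≤ ENNReal.ofReal 400 *
        (eLpNorm (fun x => f x - g x) 6 volume * eLpNorm h (3/2 : ℝ≥0∞) volume) := by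
        gcongr
    _ ≤ ENNReal.ofReal 400 * (eLpNorm (fun x => f x - g x) 6 volume *
        (eLpNorm Q 6 volume ^ 3 * eLpNorm f 6 volume
          + eLpNorm Q 6 volume ^ 3 * eLpNorm g 6 volume
          + eLpNorm f 6 volume ^ 4 + eLpNorm g 6 volume ^ 4)) := by
        gcongr
        refine stepD.trans ?_
        rw [hf4, hg4]
        gcongr
    _ = ENNReal.ofReal 400 * eLpNorm (fun x => f x - g x) 6 volume *
        (eLpNorm Q 6 volume ^ 3 * eLpNorm f 6 volume
          + eLpNorm Q 6 volume ^ 3 * eLpNorm g 6 volume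
          + eLpNorm f 6 volume ^ 4 + eLpNorm g 6 volume ^ 4) := by rw [mul_assoc]

end
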